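/- arXiv:2604.04851 — 3 statements merged into one kernel-verified Lean document; each statement's English description precedes it below -/
import Mathlib

section
/- Let C be a k×n integer matrix of rank k < n. Then there exist n−k linearly independent integer vectors y_1,…,y_{n−k} in the kernel of C such that the maximum absolute value of any entry of each y_i is at most Δ(C), where Δ(C) is the maximum absolute value of any square subdeterminant of C. -/
/-!
Pick k columns `c` of `C` forming a nonsingular k×k block `B` with `d = det B`. For every other
column `j`, Cramer's rule solves `B w = d • C_j` with `w r = det (B with column r replaced by C_j)`,
so `d • e_j - Σ_r w r • e_{c r}` lies in the kernel of `C`. All its entries are `0` or, up to sign,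
k×k minors of `C`, hence bounded by `Δ`; restricted to the non-basic coordinates these vectors
are `d` times the standard basis, hence linearly independent.
-/

open Matrix Function

theorem Matrix.exists_injective_det_submatrix_ne_zero {K m n : Type*} [Field K] [Fintype m]
    [DecidableEq m] [Fintype n] (A : Matrix m n K) (hA : A.rank = Fintype.card m) :
    ∃ c : m → n, Injective c ∧ (A.submatrix id c).det ≠ 0 := by
  obtain ⟨κ, a, ha, hspan, hli⟩ := exists_linearIndependent' K A.col
  have : Finite κ := .of_injective a ha
  have := Fintype.ofFinite κ
  have hcard : Fintype.card m = Fintype.card κ := by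
    rw [← hA, rank_eq_finrank_span_cols, ← hspan, finrank_span_eq_card hli]
  let e : m ≃ κ := Fintype.equivOfCardEq hcard
  refine ⟨a ∘ e, ha.comp e.injective, ?_⟩
  rw [← isUnit_iff_ne_zero, ← isUnit_iff_isUnit_det, ← linearIndependent_cols_iff_isUnit]
  exact hli.comp e e.injective

theorem Matrix.mulVec_extend_zero {R m n p : Type*} [CommRing R] [Fintype m] [Fintype n]
    (C : Matrix p n R) {c : m → n} (hc : Injective c) (w : m → R) :
    C *ᵥ extend c w 0 = C.submatrix id c *ᵥ w := by
  ext s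
  refine (Fintype.sum_of_injective c hc _ _ (fun j hj => ?_) (fun r => ?_)).symm
  · rw [extend_apply' _ _ _ hj, Pi.zero_apply, mul_zero]
  · rw [hc.extend_apply]; rfl

theorem Function.Injective.update_of_notMem_range {α β : Type*} [DecidableEq α] {c : α → β}
    {b : β} (hc : Injective c) (hb : b ∉ Set.range c) (a : α) : Injective (update c a b) := by
  intro a₁ a₂ h
  simp only [update_apply] at h
  split_ifs at h with h₁ h₂ h₂
  · rw [h₁, h₂]
  · exact absurd ⟨a₂, h.symm⟩ hb
  · exact absurd ⟨a₁, h⟩ hb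
  · exact hc h

theorem Fin.exists_injective_notMem_range {k n : ℕ} {c : Fin k → Fin n} (hc : Injective c) :
    ∃ e : Fin (n - k) → Fin n, Injective e ∧ ∀ i, e i ∉ Set.range c := by
  have hcard : Fintype.card ↥(Set.range c)ᶜ = n - k := by
    rw [Fintype.card_compl_set, Set.card_range_of_injective hc, Fintype.card_fin, Fintype.card_fin]
  let e : Fin (n - k) ≃ ↥(Set.range c)ᶜ := (Fintype.equivFinOfCardEq hcard).symm
  exact ⟨Subtype.val ∘ e, Subtype.val_injective.comp e.injective, fun i => (e i).2⟩

theorem linearIndependent_of_comp_eq_single {R ι n : Type*} [Ring R] [IsDomain R] [DecidableEq ι]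
    {v : ι → n → R} (e : ι → n) {d : R} (hd : d ≠ 0) (h : ∀ i, v i ∘ e = Pi.single i d) :
    LinearIndependent R v := by
  refine LinearIndependent.of_comp (LinearMap.funLeft R R e) ?_
  convert Pi.linearIndependent_single_of_ne_zero (R := R) fun (_ : ι) => hd
  exact h _

namespace Matrix

variable {R m n : Type*} [CommRing R] [Fintype m] [DecidableEq m] [DecidableEq n]
  (C : Matrix m n R) (c : m → n) (j : n)

noncomputable def cramerKernelVec : n → R :=
  Pi.single j (C.submatrix id c).det - extend c (cramer (C.submatrix id c) (C.col j)) 0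

variable {C c j}

theorem mulVec_cramerKernelVec [Fintype n] (hc : Injective c) :
    C *ᵥ cramerKernelVec C c j = 0 := by
  rw [cramerKernelVec, mulVec_sub, mulVec_single, mulVec_extend_zero C hc, mulVec_cramer,
    op_smul_eq_smul, sub_self]

theorem cramerKernelVec_apply_of_notMem_range {i : n} (hi : i ∉ Set.range c) :
    cramerKernelVec C c j i = (Pi.single j (C.submatrix id c).det : n → R) i := by
  rw [cramerKernelVec, Pi.sub_apply, extend_apply' _ _ _ hi, Pi.zero_apply, sub_zero]

theorem cramerKernelVec_apply_comp (hc : Injective c) (hj : j ∉ Set.range c) (r : m) :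
    cramerKernelVec C c j (c r) = -(C.submatrix id (update c r j)).det := by
  have hne : c r ≠ j := fun h => hj ⟨r, h⟩
  rw [cramerKernelVec, Pi.sub_apply, Pi.single_eq_of_ne hne, hc.extend_apply, cramer_apply,
    zero_sub]
  congr 2
  ext s t
  rcases eq_or_ne t r with rfl | ht
  · simp
  · simp [updateCol_ne ht, update_of_ne ht]

variable {S : Type*} [CommRing S] [LinearOrder S] [IsStrictOrderedRing S]

theorem abs_cramerKernelVec_le {C : Matrix m n S} {Δ : S} (hΔ0 : 0 ≤ Δ)
    (hΔ : ∀ c' : m → n, Injective c' → |(C.submatrix id c').det| ≤ Δ)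
    (hc : Injective c) (hj : j ∉ Set.range c) (i : n) : |cramerKernelVec C c j i| ≤ Δ := by
  by_cases hi : i ∈ Set.range c
  · obtain ⟨r, rfl⟩ := hi
    rw [cramerKernelVec_apply_comp hc hj, abs_neg]
    exact hΔ _ (hc.update_of_notMem_range hj r)
  · rw [cramerKernelVec_apply_of_notMem_range hi, Pi.single_apply]
    split_ifs
    · exact hΔ c hc
    · rwa [abs_zero]

end Matrix

theorem stmt_0_general (k n : ℕ) (C : Matrix (Fin k) (Fin n) ℤ)
    (hrank : (C.map (Int.cast : ℤ → ℝ)).rank = k)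
    (Δ : ℤ)
    (hΔ : ∀ (l : ℕ) (r : Fin l → Fin k) (c : Fin l → Fin n),
      Function.Injective r → Function.Injective c →
      |(C.submatrix r c).det| ≤ Δ) :
    ∃ y : Fin (n - k) → (Fin n → ℤ),
      LinearIndependent ℝ (fun i => fun j => ((y i j : ℝ))) ∧
      (∀ i, C.mulVec (y i) = 0) ∧
      (∀ i j, |y i j| ≤ Δ) := by
  obtain ⟨c, hc, hdet⟩ := exists_injective_det_submatrix_ne_zero (C.map (Int.cast : ℤ → ℝ))
    (by rw [hrank, Fintype.card_fin])
  obtain ⟨e, he, hec⟩ := Fin.exists_injective_notMem_range hc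
  -- the empty minor has determinant 1
  have hΔ0 : 0 ≤ Δ := zero_le_one.trans <| by
    simpa using hΔ 0 finZeroElim finZeroElim (fun a => a.elim0) (fun a => a.elim0)
  refine ⟨fun i => cramerKernelVec C c (e i), ?_, fun i => mulVec_cramerKernelVec hc,
    fun i => abs_cramerKernelVec_le hΔ0 (fun c' hc' => hΔ k id c' injective_id hc') hc (hec i)⟩
  refine linearIndependent_of_comp_eq_single e (d := ((C.submatrix id c).det : ℝ)) ?_ fun i => ?_
  · rwa [Int.cast_det]
  · ext i'
    simp [cramerKernelVec_apply_of_notMem_range (hec i'), Pi.single_apply, he.eq_iff]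

/-- Adjugate basis construction: a rank-k integer matrix C (k < n) has n-k
linearly independent integer kernel vectors with entries bounded by the
maximum absolute value of any square subdeterminant of C. -/
theorem stmt_0 (k n : ℕ) (hkn : k < n) (C : Matrix (Fin k) (Fin n) ℤ)
    (hrank : (C.map (Int.cast : ℤ → ℝ)).rank = k)
    (Δ : ℤ)
    (hΔ : ∀ (l : ℕ) (r : Fin l → Fin k) (c : Fin l → Fin n),
      Function.Injective r → Function.Injective c →
      |(C.submatrix r c).det| ≤ Δ) :
    ∃ y : Fin (n - k) → (Fin n → ℤ),
      LinearIndependent ℝ (fun i => fun j => ((y i j : ℝ))) ∧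
      (∀ i, C.mulVec (y i) = 0) ∧
      (∀ i j, |y i j| ≤ Δ) :=
  stmt_0_general k n C hrank Δ hΔ
end

section
/- Let Q be a symmetric n×n real matrix, C a real matrix with kernel V, and y ∈ V with yᵀQ ∉ rowspace(C) and yᵀQy ≥ 0. Let W = V ∩ {w : yᵀQw = 0}. Then the number of positive eigenvalues of the restriction of the quadratic form Q to W is exactly one less than the number of positive eigenvalues of the restriction of Q to V. -/
/-!
For a real symmetric matrix `H`, the number of positive eigenvalues is the largest dimension of a
subspace on which `x ↦ xᵀHx` is positive definite (diagonalise by the eigenvector matrix and read it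
off for diagonal matrices). This is invariant under congruence `H ↦ BᵀHB` by an injective `B`, so
`ν₊(Q|_V)` and `ν₊(Q|_W)` are the largest dimensions of `Q`-positive subspaces of `V` and `W`.

As `W` is a hyperplane of `V`, cutting a positive subspace of `V` by `yᵀQ = 0` gives
`ν₊(Q|_V) ≤ ν₊(Q|_W) + 1`. Conversely, `yᵀQ ∉ rowspace C` yields `z ∈ V` with `yᵀQz = 1`, and then
`w = z + t y` has `wᵀQw > 0` for large `t` because `yᵀQy ≥ 0`. A positive subspace `P ⊆ W` is
`Q`-orthogonal to `y`, so the shear `u ↦ u - (wᵀQu / wᵀQy) y` keeps it positive (again as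
`yᵀQy ≥ 0`) and makes it `Q`-orthogonal to `w`; adding `ℝ w` gives a positive subspace of `V` of
dimension `dim P + 1`.
-/

open Matrix Module Submodule

namespace Matrix

variable {ι κ : Type*}

section Congruence

variable [Fintype κ] {B : Matrix ι κ ℝ}

theorem finrank_map_mulVecLin (hB : Function.Injective B.mulVec) (P : Submodule ℝ (κ → ℝ)) :
    finrank ℝ (P.map B.mulVecLin) = finrank ℝ P :=
  (Submodule.equivMapOfInjective _ hB P).finrank_eq.symm

theorem finrank_comap_mulVecLin (hB : Function.Injective B.mulVec) {P : Submodule ℝ (ι → ℝ)}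
    (hP : P ≤ LinearMap.range B.mulVecLin) : finrank ℝ (P.comap B.mulVecLin) = finrank ℝ P := by
  rw [← finrank_map_mulVecLin hB, Submodule.map_comap_eq_self hP]

variable [Fintype ι] {Q : Matrix ι ι ℝ}

theorem dotProduct_transpose_mul_mul_mulVec_self (c : κ → ℝ) :
    c ⬝ᵥ (Bᵀ * Q * B) *ᵥ c = B *ᵥ c ⬝ᵥ Q *ᵥ (B *ᵥ c) := by
  rw [Matrix.mul_assoc, ← mulVec_mulVec, dotProduct_mulVec, vecMul_transpose, mulVec_mulVec,
    ← mulVec_mulVec]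

end Congruence

variable [Fintype ι]

def PosDefOn (Q : Matrix ι ι ℝ) (P : Submodule ℝ (ι → ℝ)) : Prop :=
  ∀ x ∈ P, x ≠ 0 → 0 < x ⬝ᵥ Q *ᵥ x

section PosDefOn

variable {Q : Matrix ι ι ℝ} {P : Submodule ℝ (ι → ℝ)}

theorem PosDefOn.nonneg (hP : PosDefOn Q P) {x : ι → ℝ} (hx : x ∈ P) : 0 ≤ x ⬝ᵥ Q *ᵥ x := by
  rcases eq_or_ne x 0 with rfl | hx0
  · simp
  · exact (hP x hx hx0).le

theorem PosDefOn.mono {P' : Submodule ℝ (ι → ℝ)} (hP : PosDefOn Q P) (h : P' ≤ P) :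
    PosDefOn Q P' :=
  fun x hx => hP x (h hx)

variable [Fintype κ] {B : Matrix ι κ ℝ}

theorem PosDefOn.map_mulVecLin {P : Submodule ℝ (κ → ℝ)} (hP : PosDefOn (Bᵀ * Q * B) P) :
    PosDefOn Q (P.map B.mulVecLin) := by
  rintro _ ⟨c, hc, rfl⟩ hc0
  rw [mulVecLin_apply, ← dotProduct_transpose_mul_mul_mulVec_self]
  exact hP c hc fun h => hc0 (by simp [h])

theorem PosDefOn.comap_mulVecLin (hP : PosDefOn Q P) (hB : Function.Injective B.mulVec) :
    PosDefOn (Bᵀ * Q * B) (P.comap B.mulVecLin) := by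
  intro c hc hc0
  rw [dotProduct_transpose_mul_mul_mulVec_self]
  exact hP _ hc fun h => hc0 (hB (by rw [h, mulVec_zero]))

end PosDefOn

section Diagonal

variable (d : ι → ℝ)

theorem finrank_ker_funLeft_not_pos :
    finrank ℝ (LinearMap.ker (LinearMap.funLeft ℝ ℝ (Subtype.val : {i // ¬ 0 < d i} → ι)))
      = Fintype.card {i // 0 < d i} := by
  set π := LinearMap.funLeft ℝ ℝ (Subtype.val : {i // ¬ 0 < d i} → ι)
  have hrange : LinearMap.range π = ⊤ := LinearMap.range_eq_top.mpr
    (LinearMap.funLeft_surjective_of_injective ℝ ℝ _ Subtype.val_injective)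
  have := LinearMap.finrank_range_add_finrank_ker π
  rw [hrange, finrank_top, Module.finrank_fintype_fun_eq_card, Module.finrank_fintype_fun_eq_card,
    Fintype.card_subtype_compl] at this
  have := Fintype.card_subtype_le fun i => 0 < d i
  omega

variable [DecidableEq ι]

theorem dotProduct_diagonal_mulVec_self (x : ι → ℝ) :
    x ⬝ᵥ diagonal d *ᵥ x = ∑ i, d i * x i ^ 2 := by
  simp only [dotProduct, mulVec_diagonal]
  exact Finset.sum_congr rfl fun i _ => by ring

theorem posDefOn_diagonal_ker_funLeft :
    PosDefOn (diagonal d)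
      (LinearMap.ker (LinearMap.funLeft ℝ ℝ (Subtype.val : {i // ¬ 0 < d i} → ι))) := by
  intro x hx hx0
  have hxi : ∀ i, ¬ 0 < d i → x i = 0 := fun i hi => congrFun hx ⟨i, hi⟩
  obtain ⟨i, hi⟩ := Function.ne_iff.mp hx0
  have hdi : 0 < d i := by_contra fun h => hi (hxi i h)
  rw [dotProduct_diagonal_mulVec_self]
  refine Finset.sum_pos' (fun j _ => ?_) ⟨i, Finset.mem_univ i, mul_pos hdi (sq_pos_of_ne_zero hi)⟩
  by_cases hj : 0 < d j
  · positivity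
  · simp [hxi j hj]

theorem finrank_le_card_pos_of_posDefOn_diagonal {P : Submodule ℝ (ι → ℝ)}
    (hP : PosDefOn (diagonal d) P) : finrank ℝ P ≤ Fintype.card {i // 0 < d i} := by
  let π := LinearMap.funLeft ℝ ℝ (Subtype.val : {i // 0 < d i} → ι)
  suffices Function.Injective (π ∘ₗ P.subtype) by
    simpa using LinearMap.finrank_le_finrank_of_injective this
  rw [← LinearMap.ker_eq_bot, eq_bot_iff]
  rintro ⟨x, hxP⟩ hx
  have hxi : ∀ i, 0 < d i → x i = 0 := fun i hi => congrFun hx ⟨i, hi⟩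
  have hq : x ⬝ᵥ diagonal d *ᵥ x ≤ 0 := by
    rw [dotProduct_diagonal_mulVec_self]
    refine Finset.sum_nonpos fun j _ => ?_
    by_cases hj : 0 < d j
    · simp [hxi j hj]
    · exact mul_nonpos_of_nonpos_of_nonneg (not_lt.mp hj) (sq_nonneg _)
  by_contra hx0
  exact (hq.not_gt (hP x hxP fun h => hx0 (by simp [h])))

end Diagonal

section Hermitian

variable [DecidableEq ι] {H : Matrix ι ι ℝ} (hH : H.IsHermitian)

theorem IsHermitian.transpose_eigenvectorUnitary_mul_mul :
    (hH.eigenvectorUnitary : Matrix ι ι ℝ)ᵀ * H * hH.eigenvectorUnitary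
      = diagonal hH.eigenvalues := by
  have := hH.conjStarAlgAut_star_eigenvectorUnitary
  rw [Unitary.conjStarAlgAut_star_apply, star_eq_conjTranspose,
    conjTranspose_eq_transpose_of_trivial] at this
  simpa using this

theorem IsHermitian.mulVec_eigenvectorUnitary_injective :
    Function.Injective (hH.eigenvectorUnitary : Matrix ι ι ℝ).mulVec := by
  intro x x' h
  simpa [mulVec_mulVec] using congrArg (star (hH.eigenvectorUnitary : Matrix ι ι ℝ) *ᵥ ·) h

theorem IsHermitian.exists_posDefOn_finrank_eq :
    ∃ P, PosDefOn H P ∧ finrank ℝ P = Fintype.card {i // 0 < hH.eigenvalues i} := by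
  have hD := posDefOn_diagonal_ker_funLeft hH.eigenvalues
  rw [← hH.transpose_eigenvectorUnitary_mul_mul] at hD
  exact ⟨_, hD.map_mulVecLin, by
    rw [finrank_map_mulVecLin hH.mulVec_eigenvectorUnitary_injective, finrank_ker_funLeft_not_pos]⟩

theorem IsHermitian.finrank_le_of_posDefOn {P : Submodule ℝ (ι → ℝ)} (hP : PosDefOn H P) :
    finrank ℝ P ≤ Fintype.card {i // 0 < hH.eigenvalues i} := by
  have hU := hH.mulVec_eigenvectorUnitary_injective
  have hD := hP.comap_mulVecLin hU
  rw [hH.transpose_eigenvectorUnitary_mul_mul] at hD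
  have hsurj : LinearMap.range (hH.eigenvectorUnitary : Matrix ι ι ℝ).mulVecLin = ⊤ :=
    LinearMap.range_eq_top.mpr fun x => ⟨star (hH.eigenvectorUnitary : Matrix ι ι ℝ) *ᵥ x,
      by simp [mulVec_mulVec]⟩
  rw [← finrank_comap_mulVecLin hU (hsurj ▸ le_top)]
  exact finrank_le_card_pos_of_posDefOn_diagonal _ hD

end Hermitian

section BasisMatrix

variable [Fintype κ] [DecidableEq κ] {Q : Matrix ι ι ℝ} {B : Matrix ι κ ℝ}
  (hH : (Bᵀ * Q * B).IsHermitian)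

theorem exists_posDefOn_le_range_finrank_eq (hB : Function.Injective B.mulVec) :
    ∃ P ≤ LinearMap.range B.mulVecLin, PosDefOn Q P ∧
      finrank ℝ P = Fintype.card {i // 0 < hH.eigenvalues i} := by
  obtain ⟨P, hP, hdim⟩ := hH.exists_posDefOn_finrank_eq
  exact ⟨P.map B.mulVecLin, LinearMap.map_le_range, hP.map_mulVecLin,
    by rw [finrank_map_mulVecLin hB, hdim]⟩

theorem finrank_le_of_posDefOn_le_range (hB : Function.Injective B.mulVec)
    {P : Submodule ℝ (ι → ℝ)} (hPB : P ≤ LinearMap.range B.mulVecLin) (hP : PosDefOn Q P) :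
    finrank ℝ P ≤ Fintype.card {i // 0 < hH.eigenvalues i} := by
  rw [← finrank_comap_mulVecLin hB hPB]
  exact hH.finrank_le_of_posDefOn (hP.comap_mulVecLin hB)

end BasisMatrix

section Extension

variable {Q : Matrix ι ι ℝ} {P : Submodule ℝ (ι → ℝ)}

theorem IsSymm.dotProduct_mulVec_comm (hQ : Q.IsSymm) (x y : ι → ℝ) :
    x ⬝ᵥ Q *ᵥ y = y ⬝ᵥ Q *ᵥ x := by
  rw [dotProduct_mulVec, ← mulVec_transpose, hQ.eq, dotProduct_comm]

theorem add_smul_dotProduct_mulVec_add_smul (u v : ι → ℝ) (s : ℝ) :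
    (u + s • v) ⬝ᵥ Q *ᵥ (u + s • v)
      = u ⬝ᵥ Q *ᵥ u + s * (u ⬝ᵥ Q *ᵥ v + v ⬝ᵥ Q *ᵥ u) + s ^ 2 * (v ⬝ᵥ Q *ᵥ v) := by
  simp only [mulVec_add, mulVec_smul, dotProduct_add, add_dotProduct, smul_dotProduct,
    dotProduct_smul, smul_eq_mul]
  ring

theorem PosDefOn.map_of_le (hP : PosDefOn Q P) {φ : (ι → ℝ) →ₗ[ℝ] ι → ℝ}
    (hφ : ∀ u ∈ P, u ⬝ᵥ Q *ᵥ u ≤ φ u ⬝ᵥ Q *ᵥ φ u) :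
    PosDefOn Q (P.map φ) ∧ finrank ℝ (P.map φ) = finrank ℝ P := by
  refine ⟨?_, ?_⟩
  · rintro _ ⟨u, hu, rfl⟩ hφu
    exact (hP u hu fun h => hφu (by simp [h])).trans_le (hφ u hu)
  · have hinj : Function.Injective (φ ∘ₗ P.subtype) := by
      refine (injective_iff_map_eq_zero _).mpr fun u hu => by_contra fun hu0 => ?_
      have := hφ u u.2
      simp only [LinearMap.comp_apply, subtype_apply] at hu
      rw [hu, zero_dotProduct] at this
      exact (hP u u.2 (by simpa using hu0)).not_ge this
    rw [← LinearMap.finrank_range_of_inj hinj, LinearMap.range_comp, range_subtype]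

theorem PosDefOn.sup_span_singleton (hQ : Q.IsSymm) (hP : PosDefOn Q P) {w : ι → ℝ}
    (hw : 0 < w ⬝ᵥ Q *ᵥ w) (hwP : ∀ u ∈ P, w ⬝ᵥ Q *ᵥ u = 0) :
    PosDefOn Q (P ⊔ span ℝ {w}) ∧ finrank ℝ (P ⊔ span ℝ {w} : Submodule ℝ (ι → ℝ))
      = finrank ℝ P + 1 := by
  refine ⟨?_, finrank_sup_span_singleton fun hwP' => by simp [hwP w hwP'] at hw⟩
  intro x hx hx0
  obtain ⟨u, hu, v, hv, rfl⟩ := Submodule.mem_sup.mp hx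
  obtain ⟨s, rfl⟩ := mem_span_singleton.mp hv
  rw [add_smul_dotProduct_mulVec_add_smul, hQ.dotProduct_mulVec_comm u w, hwP u hu]
  rcases eq_or_ne s 0 with rfl | hs
  · simpa using hP u hu (by simpa using hx0)
  · have := hP.nonneg hu
    have : 0 < s ^ 2 * (w ⬝ᵥ Q *ᵥ w) := mul_pos (sq_pos_of_ne_zero hs) hw
    linarith

theorem PosDefOn.exists_shear (hQ : Q.IsSymm) (hP : PosDefOn Q P) {y w : ι → ℝ}
    (hyP : ∀ u ∈ P, y ⬝ᵥ Q *ᵥ u = 0) (hyy : 0 ≤ y ⬝ᵥ Q *ᵥ y) (hwy : w ⬝ᵥ Q *ᵥ y ≠ 0) :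
    ∃ P' ≤ P ⊔ span ℝ {y}, PosDefOn Q P' ∧ finrank ℝ P' = finrank ℝ P ∧
      ∀ v ∈ P', w ⬝ᵥ Q *ᵥ v = 0 := by
  set g := (w ⬝ᵥ Q *ᵥ y)⁻¹ • (dotProductBilin ℝ ℝ w ∘ₗ Q.mulVecLin)
  set φ := LinearMap.id - g.smulRight y
  have hφ : ∀ u, φ u = u + (-g u) • y := fun u => by simp [φ, sub_eq_add_neg]
  obtain ⟨hP', hdim⟩ := hP.map_of_le (φ := φ) fun u hu => by
    rw [hφ, add_smul_dotProduct_mulVec_add_smul, hQ.dotProduct_mulVec_comm u y, hyP u hu]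
    nlinarith [mul_nonneg (sq_nonneg (-g u)) hyy]
  refine ⟨P.map φ, ?_, hP', hdim, ?_⟩
  · rintro _ ⟨u, hu, rfl⟩
    rw [hφ]
    exact add_mem (mem_sup_left hu) (mem_sup_right (smul_mem _ _ (mem_span_singleton_self y)))
  · rintro _ ⟨u, hu, rfl⟩
    rw [hφ, mulVec_add, dotProduct_add, mulVec_smul, dotProduct_smul]
    simp only [g, LinearMap.smul_apply, LinearMap.comp_apply, mulVecLin_apply,
      dotProductBilin_apply_apply, smul_eq_mul]
    field_simp
    ring

theorem PosDefOn.exists_finrank_add_one (hQ : Q.IsSymm) (hP : PosDefOn Q P) {y z : ι → ℝ}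
    (hyP : ∀ u ∈ P, y ⬝ᵥ Q *ᵥ u = 0) (hyy : 0 ≤ y ⬝ᵥ Q *ᵥ y) (hyz : y ⬝ᵥ Q *ᵥ z = 1) :
    ∃ P' ≤ P ⊔ span ℝ {y, z}, PosDefOn Q P' ∧ finrank ℝ P' = finrank ℝ P + 1 := by
  set t := |z ⬝ᵥ Q *ᵥ z| + 1
  set w := z + t • y
  have hzy : z ⬝ᵥ Q *ᵥ y = 1 := by rw [hQ.dotProduct_mulVec_comm, hyz]
  have hww : 0 < w ⬝ᵥ Q *ᵥ w := by
    rw [add_smul_dotProduct_mulVec_add_smul, hzy, hyz]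
    nlinarith [neg_abs_le (z ⬝ᵥ Q *ᵥ z), abs_nonneg (z ⬝ᵥ Q *ᵥ z), mul_nonneg (sq_nonneg t) hyy]
  have hwy : w ⬝ᵥ Q *ᵥ y ≠ 0 := by
    have : 0 ≤ t * (y ⬝ᵥ Q *ᵥ y) := mul_nonneg (by positivity) hyy
    rw [add_dotProduct, smul_dotProduct, hzy, smul_eq_mul]
    linarith
  obtain ⟨P₀, hP₀le, hP₀, hdim₀, hwP₀⟩ := hP.exists_shear hQ hyP hyy hwy
  obtain ⟨hP', hdim'⟩ := hP₀.sup_span_singleton hQ hww hwP₀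
  refine ⟨P₀ ⊔ span ℝ {w}, sup_le (hP₀le.trans ?_) ?_, hP', by rw [hdim', hdim₀]⟩
  · exact sup_le_sup_left (span_mono (by simp)) P
  · rw [span_singleton_le_iff_mem]
    exact mem_sup_right (add_mem (subset_span (by simp)) (smul_mem _ _ (subset_span (by simp))))

end Extension

theorem exists_mulVec_eq_zero_dotProduct_eq_one {K ι κ : Type*} [Field K] [Fintype ι]
    [DecidableEq ι] [Finite κ] {C : Matrix κ ι K} {g : ι → K}
    (hg : g ∉ span K (Set.range fun i => C i)) : ∃ v, C *ᵥ v = 0 ∧ g ⬝ᵥ v = 1 := by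
  suffices ∃ v, C *ᵥ v = 0 ∧ g ⬝ᵥ v ≠ 0 by
    obtain ⟨v, hv, hgv⟩ := this
    exact ⟨(g ⬝ᵥ v)⁻¹ • v, by rw [mulVec_smul, hv, smul_zero], by
      rw [dotProduct_smul, smul_eq_mul, inv_mul_cancel₀ hgv]⟩
  by_contra! h
  set e := dotProductEquiv K ι
  have he : span K (Set.range fun i => e (C i))
      = (span K (Set.range fun i => C i)).map (e : (ι → K) →ₗ[K] Dual K (ι → K)) := by
    rw [map_span, ← Set.range_comp]
    rfl
  have := mem_span_of_iInf_ker_le_ker (L := fun i => e (C i)) (K := e g)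
    fun v hv => h v (funext fun i => (mem_iInf _).mp hv i)
  rw [he, mem_map_equiv, LinearEquiv.symm_apply_apply] at this
  exact hg this

end Matrix

theorem Submodule.finrank_le_finrank_inf_ker_add_one {K V : Type*} [Field K] [AddCommGroup V]
    [Module K V] [FiniteDimensional K V] (P : Submodule K V) (f : Module.Dual K V) :
    finrank K P ≤ finrank K (P ⊓ LinearMap.ker f : Submodule K V) + 1 := by
  have hrank := LinearMap.finrank_range_add_finrank_ker (f ∘ₗ P.subtype)
  have hrange : finrank K (LinearMap.range (f ∘ₗ P.subtype)) ≤ 1 := by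
    simpa using Submodule.finrank_le (LinearMap.range (f ∘ₗ P.subtype))
  rw [LinearMap.ker_comp, ← finrank_map_subtype_eq, map_comap_subtype] at hrank
  omega

/-- A gradient branch strictly reduces the positive inertia: if y ∈ V = ker(C)
with yᵀQ ∉ rowspace(C) and yᵀQy ≥ 0, and W = V ∩ {w : yᵀQw = 0}, then
ν₊(Q|_W) = ν₊(Q|_V) − 1, where the restrictions are represented by BᵀQB for
basis matrices B of the respective subspaces. -/
theorem stmt_7 (k n r : ℕ)
    (Q : Matrix (Fin n) (Fin n) ℝ) (hQ : Q.IsSymm)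
    (C : Matrix (Fin k) (Fin n) ℝ)
    (y : Fin n → ℝ) (hyV : C.mulVec y = 0)
    (hynot : Matrix.vecMul y Q ∉ Submodule.span ℝ (Set.range fun i => C i))
    (hcurv : 0 ≤ y ⬝ᵥ Q.mulVec y)
    (BV : Matrix (Fin n) (Fin r) ℝ)
    (BW : Matrix (Fin n) (Fin (r - 1)) ℝ)
    (hBVli : LinearIndependent ℝ (fun i : Fin r => fun j => BV j i))
    (hBVspan : Submodule.span ℝ (Set.range fun i : Fin r => fun j => BV j i)
      = LinearMap.ker C.mulVecLin)
    (hBWli : LinearIndependent ℝ (fun i : Fin (r - 1) => fun j => BW j i))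
    (hBWspan : Submodule.span ℝ (Set.range fun i : Fin (r - 1) => fun j => BW j i)
      = LinearMap.ker C.mulVecLin ⊓
        LinearMap.ker ((Matrix.of fun (_ : Fin 1) => Matrix.vecMul y Q)).mulVecLin)
    (hHV : (BVᵀ * Q * BV).IsHermitian)
    (hHW : (BWᵀ * Q * BW).IsHermitian) :
    Nat.card {i : Fin (r - 1) // 0 < hHW.eigenvalues i}
      = Nat.card {i : Fin r // 0 < hHV.eigenvalues i} - 1 := by
  set V := LinearMap.ker C.mulVecLin
  set f := dotProductBilin ℝ ℝ y ∘ₗ Q.mulVecLin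
  have hV : LinearMap.range BV.mulVecLin = V := by rw [range_mulVecLin]; exact hBVspan
  have hW : LinearMap.range BW.mulVecLin = V ⊓ LinearMap.ker f := by
    have hker : LinearMap.ker (of fun _ : Fin 1 => y ᵥ* Q).mulVecLin = LinearMap.ker f := by
      ext x
      simp [f, funext_iff, mulVec, dotProduct_mulVec]
    rw [range_mulVecLin, ← hker]
    exact hBWspan
  have hBV := mulVec_injective_iff.mpr hBVli
  have hBW := mulVec_injective_iff.mpr hBWli
  obtain ⟨z, hzV, hyz⟩ := exists_mulVec_eq_zero_dotProduct_eq_one hynot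
  rw [← dotProduct_mulVec] at hyz
  have hlower : Fintype.card {i // 0 < hHW.eigenvalues i} + 1
      ≤ Fintype.card {i // 0 < hHV.eigenvalues i} := by
    obtain ⟨P, hPW, hP, hdim⟩ := exists_posDefOn_le_range_finrank_eq hHW hBW
    rw [hW] at hPW
    obtain ⟨P', hP'le, hP', hdim'⟩ :=
      hP.exists_finrank_add_one hQ (fun u hu => (hPW hu).2) hcurv hyz
    have hP'V : P' ≤ LinearMap.range BV.mulVecLin := by
      rw [hV]
      refine hP'le.trans (sup_le (hPW.trans inf_le_left) (span_le.mpr ?_))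
      exact Set.insert_subset_iff.mpr ⟨hyV, Set.singleton_subset_iff.mpr hzV⟩
    rw [← hdim, ← hdim']
    exact finrank_le_of_posDefOn_le_range hHV hBV hP'V hP'
  have hupper : Fintype.card {i // 0 < hHV.eigenvalues i}
      ≤ Fintype.card {i // 0 < hHW.eigenvalues i} + 1 := by
    obtain ⟨P, hPV, hP, hdim⟩ := exists_posDefOn_le_range_finrank_eq hHV hBV
    rw [hV] at hPV
    have hcut := finrank_le_of_posDefOn_le_range hHW hBW
      (hW ▸ inf_le_inf_right _ hPV) (hP.mono inf_le_left)
    have := P.finrank_le_finrank_inf_ker_add_one f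
    omega
  rw [Nat.card_eq_fintype_card, Nat.card_eq_fintype_card]
  omega
end

section
/- Let P = {x ∈ ℝ^n : Ax ≤ b} with A ∈ ℤ^{m×n}, b ∈ ℤ^m, and let P_I = conv(P ∩ ℤ^n). Fix integers j_1,…,j_m ≥ 1 and consider the cell P(j) = {x ∈ P : b_i − 2^{j_i} ≤ a_iᵀx ≤ b_i − 2^{j_i−1} for all i}. If v is a vertex of P_I lying in P(j) and y ∈ P(j) ∩ ℤ^n with y ≠ v, then a contradiction arises: the reflection 2v − y lies in P ∩ ℤ^n, and v = ½(y + (2v−y)) is a proper convex combination of two integer points of P distinct from v, contradicting that v is a vertex of P_I. Hence v is the unique integer point of P(j). -/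
open Matrix

/-!
If `y` is an integer point of the cell through the vertex `v`, its reflection `v + (v - y)` is
again an integer point of `P`: for each row, `a_iᵀ(2v - y) ≤ 2(b_i - 2^{j_i-1}) - (b_i - 2^{j_i})
≤ b_i`. Since `v` is the midpoint of `y` and its reflection, extremality of `v` forces `y = v`.
-/

theorem eq_of_mem_extremePoints_of_reflection_mem {𝕜 E : Type*} [Field 𝕜] [LinearOrder 𝕜]
    [IsStrictOrderedRing 𝕜] [AddCommGroup E] [Module 𝕜 E] {A : Set E} {v y : E}
    (hv : v ∈ Set.extremePoints 𝕜 A) (hy : y ∈ A) (hy' : v + (v - y) ∈ A) : y = v := by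
  have : Invertible (2 : 𝕜) := invertibleOfNonzero two_ne_zero
  have h := hv.2 (x₁ := v - (v - y)) (by rwa [sub_sub_cancel]) hy'
    (mem_openSegment_sub_add v (v - y))
  rwa [sub_sub_cancel] at h

theorem reflection_mem_intPoints {ι : Type*} {v y : ι → ℝ} (hv : ∀ k, ∃ z : ℤ, v k = z)
    (hy : ∀ k, ∃ z : ℤ, y k = z) : ∀ k, ∃ z : ℤ, (v + (v - y)) k = z := by
  intro k
  obtain ⟨zv, hzv⟩ := hv k
  obtain ⟨zy, hzy⟩ := hy k
  exact ⟨zv + (zv - zy), by simp [hzv, hzy]⟩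

theorem mulVec_reflection_le {ι κ : Type*} [Fintype κ] {M : Matrix ι κ ℝ} {v y : κ → ℝ} {i : ι}
    {c : ℝ} {k : ℕ} (hv : (M *ᵥ v) i ≤ c - 2 ^ (k - 1)) (hy : c - 2 ^ k ≤ (M *ᵥ y) i) :
    (M *ᵥ (v + (v - y))) i ≤ c := by
  have hpow : (2 : ℝ) ^ k ≤ 2 * 2 ^ (k - 1) := by
    rw [← pow_succ']
    exact pow_le_pow_right₀ one_le_two (by omega)
  simp only [mulVec_add, mulVec_sub, Pi.add_apply, Pi.sub_apply]
  linarith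

theorem stmt_16_general (m n : ℕ) (A : Matrix (Fin m) (Fin n) ℤ) (b : Fin m → ℤ)
    (P : Set (Fin n → ℝ))
    (hP : P = {x | ∀ i, (A.map (Int.cast : ℤ → ℝ)).mulVec x i ≤ (b i : ℝ)})
    (Ints : Set (Fin n → ℝ))
    (hInts : Ints = {x | ∀ j, ∃ z : ℤ, x j = (z : ℝ)})
    (j : Fin m → ℕ)
    (Cell : Set (Fin n → ℝ))
    (hCell : Cell = {x ∈ P | ∀ i,
      (b i : ℝ) - 2 ^ (j i) ≤ (A.map (Int.cast : ℤ → ℝ)).mulVec x i ∧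
      (A.map (Int.cast : ℤ → ℝ)).mulVec x i ≤ (b i : ℝ) - 2 ^ (j i - 1)})
    (v : Fin n → ℝ)
    (hv : v ∈ Set.extremePoints ℝ (convexHull ℝ (P ∩ Ints)))
    (hvCell : v ∈ Cell) :
    ∀ y ∈ Cell ∩ Ints, y = v := by
  rintro y ⟨hyCell, hyInts⟩
  have hvInts : v ∈ Ints := (extremePoints_convexHull_subset hv).2
  subst hP hInts hCell
  refine eq_of_mem_extremePoints_of_reflection_mem hv (subset_convexHull ℝ _ ⟨hyCell.1, hyInts⟩)
    (subset_convexHull ℝ _ ⟨fun i ↦ ?_, reflection_mem_intPoints hvInts hyInts⟩)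
  exact mulVec_reflection_le (hvCell.2 i).2 (hyCell.2 i).1

/-- CKHM cell uniqueness: a vertex of the integer hull P_I lying in the cell
P(j) is the unique integer point of that cell. -/
theorem stmt_16 (m n : ℕ) (A : Matrix (Fin m) (Fin n) ℤ) (b : Fin m → ℤ)
    (P : Set (Fin n → ℝ))
    (hP : P = {x | ∀ i, (A.map (Int.cast : ℤ → ℝ)).mulVec x i ≤ (b i : ℝ)})
    (Ints : Set (Fin n → ℝ))
    (hInts : Ints = {x | ∀ j, ∃ z : ℤ, x j = (z : ℝ)})
    (j : Fin m → ℕ) (hj : ∀ i, 1 ≤ j i)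
    (Cell : Set (Fin n → ℝ))
    (hCell : Cell = {x ∈ P | ∀ i,
      (b i : ℝ) - 2 ^ (j i) ≤ (A.map (Int.cast : ℤ → ℝ)).mulVec x i ∧
      (A.map (Int.cast : ℤ → ℝ)).mulVec x i ≤ (b i : ℝ) - 2 ^ (j i - 1)})
    (v : Fin n → ℝ)
    (hv : v ∈ Set.extremePoints ℝ (convexHull ℝ (P ∩ Ints)))
    (hvCell : v ∈ Cell) :
    ∀ y ∈ Cell ∩ Ints, y = v :=
  stmt_16_general m n A b P hP Ints hInts j Cell hCell v hv hvCell
end
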